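/- arXiv:0906.4290 — 2 statements merged into one kernel-verified Lean document; each statement's English description precedes it below -/
import Mathlib

section
/- The partial sums of Catalan numbers satisfy ∑_{k=0}^{n} C_k ~ 4^{n+1}/(3·n·√(π·n)) as n → ∞, i.e., the ratio of the two sides tends to 1 as n tends to infinity. -/
/-!
By Stirling's formula, `C_k ~ 4^k / (k √(π k))`. This comparison sequence grows geometrically
with ratio `4`, and for any nonnegative sequence with `b (k+1) / b k → ρ > 1` the partial sums are
dominated by their last terms: `∑_{k ≤ n} b k ~ ρ / (ρ - 1) · b n`. With `ρ = 4` this gives the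
factor `4/3`.
-/

open Finset Filter Real

open Asymptotics Topology

theorem Asymptotics.IsEquivalent.sum_range {f g : ℕ → ℝ} (h : f ~[atTop] g) (hg : 0 ≤ g)
    (hsum : Tendsto (fun n => ∑ i ∈ range n, g i) atTop atTop) :
    (fun n => ∑ i ∈ range n, f i) ~[atTop] fun n => ∑ i ∈ range n, g i := by
  refine IsLittleO.isEquivalent ((h.isLittleO.sum_range hg hsum).congr_left fun n => ?_)
  simp only [Pi.sub_apply, sum_sub_distrib]

theorem tendsto_sum_range_atTop_of_ratio {b : ℕ → ℝ} {ρ : ℝ} (hb : 0 ≤ b) (hρ : 1 < ρ)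
    (h : Tendsto (fun n => b (n + 1) / b n) atTop (𝓝 ρ)) :
    Tendsto (fun n => ∑ i ∈ range n, b i) atTop atTop := by
  refine (not_summable_iff_tendsto_nat_atTop_of_nonneg hb).mp
    (not_summable_of_ratio_test_tendsto_gt_one hρ ?_)
  simpa only [Real.norm_of_nonneg (hb _)] using h

theorem isEquivalent_sum_range_succ_of_ratio {b : ℕ → ℝ} {ρ : ℝ} (hb : 0 ≤ b) (hρ : 1 < ρ)
    (h : Tendsto (fun n => b (n + 1) / b n) atTop (𝓝 ρ)) :
    (fun n => ∑ k ∈ range (n + 1), b k) ~[atTop] fun n => ρ / (ρ - 1) * b n := by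
  -- `e` telescopes, and `e k / b k → ρ / (ρ - 1) * (1 - ρ⁻¹) = 1`.
  set e : ℕ → ℝ := fun k => ρ / (ρ - 1) * (b k - b (k - 1))
  have hsum_e (n : ℕ) : ∑ k ∈ range (n + 1), e k = ρ / (ρ - 1) * b n - ρ / (ρ - 1) * b 0 := by
    simp only [e, ← mul_sub, ← mul_sum, sum_range_succ', Nat.add_sub_cancel, sum_range_sub]
    simp
  have hb_ne : ∀ᶠ n in atTop, b (n + 1) ≠ 0 := by
    filter_upwards [h.eventually_const_lt (zero_lt_one.trans hρ)] with n hn hzero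
    simp [hzero] at hn
  have he : e ~[atTop] b := by
    refine isEquivalent_of_tendsto_one ((tendsto_add_atTop_iff_nat 1).mp ?_)
    have hinv : Tendsto (fun n => b n / b (n + 1)) atTop (𝓝 ρ⁻¹) := by
      simpa only [inv_div] using h.inv₀ (by positivity)
    have hlim : Tendsto (fun n => ρ / (ρ - 1) * (1 - b n / b (n + 1))) atTop
        (𝓝 (ρ / (ρ - 1) * (1 - ρ⁻¹))) := tendsto_const_nhds.mul (tendsto_const_nhds.sub hinv)
    rw [show ρ / (ρ - 1) * (1 - ρ⁻¹) = 1 by field_simp [(sub_pos.mpr hρ).ne']] at hlim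
    refine hlim.congr' ?_
    filter_upwards [hb_ne] with n hn
    simp only [e, Pi.div_apply, Nat.add_sub_cancel]
    field_simp
  have hsum := tendsto_sum_range_atTop_of_ratio hb hρ h
  have hE := ((he.sum_range hb hsum).comp_tendsto (tendsto_add_atTop_nat 1))
    |>.add_const_of_norm_tendsto_atTop (c := ρ / (ρ - 1) * b 0)
      (tendsto_norm_atTop_atTop.comp (hsum.comp (tendsto_add_atTop_nat 1)))
  refine hE.symm.congr_right (Eventually.of_forall fun n => ?_)
  simp only [Function.comp_apply, hsum_e, sub_add_cancel]

theorem stirling_quotient_eq_four_pow_div_sqrt {n : ℕ} (hn : n ≠ 0) :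
    √(2 * ((2 * n : ℕ) : ℝ) * π) * (((2 * n : ℕ) : ℝ) / exp 1) ^ (2 * n) /
      (√(2 * n * π) * (n / exp 1) ^ n * (√(2 * n * π) * (n / exp 1) ^ n)) = 4 ^ n / √(π * n) := by
  have hsqrt_two_mul : √(2 * ((2 * n : ℕ) : ℝ) * π) = 2 * √(π * n) := by
    rw [show 2 * ((2 * n : ℕ) : ℝ) * π = 2 ^ 2 * (π * n) by push_cast; ring,
      sqrt_mul (by positivity), sqrt_sq (by positivity)]
  have hsqrt_sq : √(2 * n * π) * √(2 * n * π) = 2 * (π * n) := by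
    rw [mul_self_sqrt (by positivity)]; ring
  have hpow : (((2 * n : ℕ) : ℝ) / exp 1) ^ (2 * n) =
      4 ^ n * ((n / exp 1) ^ n * (n / exp 1) ^ n) := by
    rw [pow_mul, ← mul_pow, ← mul_pow]; push_cast; ring
  rw [hsqrt_two_mul, hpow, mul_mul_mul_comm (√(2 * n * π)), hsqrt_sq,
    div_eq_div_iff (by positivity) (by positivity)]
  linear_combination (2 * 4 ^ n * ((n / exp 1) ^ n * (n / exp 1) ^ n)) *
    mul_self_sqrt (by positivity : 0 ≤ π * n)

theorem isEquivalent_centralBinom :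
    (fun n : ℕ => (n.centralBinom : ℝ)) ~[atTop] fun n => 4 ^ n / √(π * n) := by
  have hfac := Stirling.factorial_isEquivalent_stirling
  have hfac_two_mul := hfac.comp_tendsto (tendsto_id.const_mul_atTop' two_pos)
  refine ((hfac_two_mul.div (hfac.mul hfac)).congr_left (Eventually.of_forall fun n => ?_))
    |>.congr_right ((eventually_ne_atTop 0).mono fun _ hn =>
      stirling_quotient_eq_four_pow_div_sqrt hn)
  simp only [Function.comp_apply, id, Pi.div_apply, Pi.mul_apply]
  rw [Nat.centralBinom_eq_two_mul_choose, Nat.cast_choose ℝ (by omega), two_mul, Nat.add_sub_cancel]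

noncomputable def catalanApprox (n : ℕ) : ℝ := 4 ^ n / (n * √(π * n))

theorem catalanApprox_nonneg : 0 ≤ catalanApprox := fun n => by
  unfold catalanApprox; positivity

theorem isEquivalent_catalan : (fun n => (catalan n : ℝ)) ~[atTop] catalanApprox := by
  have hsucc : (fun n : ℕ => (n + 1 : ℝ)) ~[atTop] fun n => (n : ℝ) :=
    (isEquivalent_of_tendsto_one (tendsto_natCast_div_add_atTop 1)).symm
  refine (isEquivalent_centralBinom.div hsucc).congr_left (Eventually.of_forall fun n => ?_)
    |>.congr_right (Eventually.of_forall fun n => ?_)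
  · rw [Pi.div_apply, ← succ_mul_catalan_eq_centralBinom]
    push_cast
    field_simp
  · simp only [Pi.div_apply, catalanApprox, div_div, mul_comm]

theorem tendsto_catalanApprox_succ_div :
    Tendsto (fun n => catalanApprox (n + 1) / catalanApprox n) atTop (𝓝 4) := by
  have hfrac : Tendsto (fun n : ℕ => ((n + 1 : ℝ) / n)⁻¹) atTop (𝓝 1) := by
    simpa only [inv_div] using tendsto_natCast_div_add_atTop (1 : ℝ)
  have hlim : Tendsto (fun n : ℕ => 4 * (((n + 1 : ℝ) / n)⁻¹ * √(((n + 1 : ℝ) / n)⁻¹))) atTop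
      (𝓝 (4 * (1 * √1))) := tendsto_const_nhds.mul (hfrac.mul hfrac.sqrt)
  rw [sqrt_one, mul_one, mul_one] at hlim
  refine hlim.congr' ((eventually_ne_atTop 0).mono fun n hn => ?_)
  rw [inv_div, sqrt_div' _ (by positivity : (0 : ℝ) ≤ n + 1)]
  simp only [catalanApprox]
  rw [sqrt_mul pi_pos.le, sqrt_mul pi_pos.le]
  push_cast
  field_simp
  ring

theorem catalan_partial_sum_equivalent :
    Filter.Tendsto
      (fun n : ℕ =>
        (∑ k ∈ Finset.range (n + 1), (catalan k : ℝ)) /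
          (4 ^ (n + 1) / (3 * n * Real.sqrt (Real.pi * n))))
      Filter.atTop (nhds 1) := by
  have hρ : (1 : ℝ) < 4 := by norm_num
  have hsum_catalan := (isEquivalent_catalan.sum_range catalanApprox_nonneg
    (tendsto_sum_range_atTop_of_ratio catalanApprox_nonneg hρ tendsto_catalanApprox_succ_div))
    |>.comp_tendsto (tendsto_add_atTop_nat 1)
  have hsum_approx := isEquivalent_sum_range_succ_of_ratio catalanApprox_nonneg hρ
    tendsto_catalanApprox_succ_div
  refine (isEquivalent_iff_tendsto_one ((eventually_ne_atTop 0).mono fun n hn => ?_)).mp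
    ((hsum_catalan.trans hsum_approx).congr_right (Eventually.of_forall fun n => ?_))
  · positivity
  · simp only [catalanApprox]
    ring
end

section
/- Let p be an odd prime and let q = p^r be a power of p (r ≥ 1), so that q ≥ 3. Then in the polynomial ring (ℤ/pℤ)[X] one has ∑_{k=0}^{q-1} k·C(2k,k)·X^k = 2X·(1 − 4X)^{(q-3)/2}, where each integer k·C(2k,k) is reduced modulo p. -/
open Finset Polynomial

/-!
Over `𝔽_p` let `Fₙ = ∑_{k<n} C(2k,k) Xᵏ`. Lucas's theorem gives
`C(2(pb+a), pb+a) ≡ C(2b,b) C(2a,a)` for `a < p`, which together with the Frobenius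
`(∑ cₖ Xᵏ)^p = ∑ cₖ X^{pk}` yields `F_{pn} = F_p · Fₙ^p`. For `k < p` one has
`C(2k,k) ≡ (-4)^k C((p-1)/2, k)` (both sides satisfy the same recursion in `k`, because
`(p-1)/2 ≡ -1/2`), and `C(2k,k) ≡ 0` once `p ≤ 2k`; so `F_p = (1-4X)^{(p-1)/2}` and by
induction `F_q = (1-4X)^{(q-1)/2}`. Applying `X · d/dX` and using `(q-1)/2 ≡ -1/2` once more
gives the claim.
-/

lemma two_mul_natCast_div_two {R : Type*} [CommRing R] {n : ℕ} (hn : Odd n) (h : (n : R) = 0) :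
    2 * ((n / 2 : ℕ) : R) = -1 := by
  have := congrArg (Nat.cast : ℕ → R) (Nat.two_mul_div_two_add_one_of_odd hn)
  push_cast at this
  linear_combination this + h

section CentralBinomModPrime

variable {p : ℕ} [Fact p.Prime]

theorem natCast_centralBinom_eq_zero {k : ℕ} (h : p ≤ 2 * k) (hk : k < p) :
    (k.centralBinom : ZMod p) = 0 := by
  rw [ZMod.natCast_eq_zero_iff, Nat.centralBinom_eq_two_mul_choose, two_mul]
  exact (Fact.out : p.Prime).dvd_choose_add hk hk (by omega)

theorem natCast_centralBinom_mul_add (b : ℕ) {a : ℕ} (ha : a < p) :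
    ((p * b + a).centralBinom : ZMod p) = b.centralBinom * a.centralBinom := by
  have hp : 0 < p := (Fact.out : p.Prime).pos
  have hlucas := (ZMod.natCast_eq_natCast_iff _ _ _).mpr
    (Choose.choose_modEq_choose_mod_mul_choose_div_nat (n := p * (2 * b) + 2 * a)
      (k := p * b + a) (p := p))
  simp only [Nat.mul_add_mod_self_left, Nat.mul_add_div hp, Nat.mod_eq_of_lt ha,
    Nat.div_eq_of_lt ha, add_zero] at hlucas
  rw [Nat.centralBinom_eq_two_mul_choose, Nat.centralBinom_eq_two_mul_choose,
    Nat.centralBinom_eq_two_mul_choose, mul_add, ← mul_assoc, mul_comm 2 p, mul_assoc, hlucas]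
  rcases lt_or_ge (2 * a) p with h2a | h2a
  · rw [Nat.mod_eq_of_lt h2a, Nat.div_eq_of_lt h2a, add_zero, Nat.cast_mul, mul_comm]
  · have h0 : ((2 * a).choose a : ZMod p) = 0 := natCast_centralBinom_eq_zero h2a ha
    have hmod : 2 * a % p = 2 * a - p := by
      rw [Nat.mod_eq_sub_mod h2a, Nat.mod_eq_of_lt (by omega)]
    rw [h0, hmod, Nat.choose_eq_zero_of_lt (by omega : 2 * a - p < a)]
    simp

theorem natCast_centralBinom_eq_neg_four_pow_mul_choose (hp : Odd p) {k : ℕ} (hk : k ≤ p / 2) :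
    (k.centralBinom : ZMod p) = (-4) ^ k * ((p / 2).choose k : ℕ) := by
  induction k with
  | zero => simp
  | succ k ih =>
    set m := p / 2
    have hk1 : ((k + 1 : ℕ) : ZMod p) ≠ 0 := by
      rw [Ne, ZMod.natCast_eq_zero_iff]
      exact Nat.not_dvd_of_pos_of_lt k.succ_pos (by omega)
    have hm : 2 * (m : ZMod p) = -1 := two_mul_natCast_div_two hp (ZMod.natCast_self p)
    have hc : ((k + 1 : ℕ) : ZMod p) * (k + 1).centralBinom =
        2 * (2 * k + 1) * k.centralBinom := by
      exact_mod_cast congrArg (Nat.cast : ℕ → ZMod p) (Nat.succ_mul_centralBinom_succ k)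
    have hb : (m.choose (k + 1) : ZMod p) * ((k + 1 : ℕ) : ZMod p) = m.choose k * (m - k) := by
      rw [← Nat.cast_sub (by omega), ← Nat.cast_mul, ← Nat.cast_mul, Nat.choose_succ_right_eq]
    apply mul_left_cancel₀ hk1
    rw [hc, ih (by omega)]
    push_cast at hb ⊢
    linear_combination 2 * (-4) ^ k * (m.choose k : ZMod p) * hm - (-4) ^ (k + 1) * hb

end CentralBinomModPrime

noncomputable def centralBinomPoly (R : Type*) [Semiring R] (n : ℕ) : R[X] :=
  ∑ k ∈ range n, C (k.centralBinom : R) * X ^ k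

theorem X_mul_derivative_centralBinomPoly (R : Type*) [CommSemiring R] (n : ℕ) :
    X * derivative (centralBinomPoly R n) =
      ∑ k ∈ range n, C ((k : R) * k.centralBinom) * X ^ k := by
  simp only [centralBinomPoly, derivative_sum, derivative_C_mul_X_pow, mul_sum]
  refine sum_congr rfl fun k _ => ?_
  rcases k with _ | k
  · simp
  · simp only [Nat.cast_add, Nat.cast_one, add_tsub_cancel_right, map_mul, pow_succ]
    ring

theorem centralBinomPoly_succ (R : Type*) [Semiring R] (n : ℕ) :
    centralBinomPoly R (n + 1) = centralBinomPoly R n + C (n.centralBinom : R) * X ^ n :=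
  sum_range_succ _ _

section CentralBinomPolyModPrime

variable {p : ℕ} [Fact p.Prime]

theorem centralBinomPoly_prime (hp : Odd p) :
    centralBinomPoly (ZMod p) p = (1 - 4 * X) ^ (p / 2) := by
  have hexpand : (1 - 4 * X : (ZMod p)[X]) ^ (p / 2) =
      ∑ k ∈ range (p / 2 + 1), C ((-4 : ZMod p) ^ k * ((p / 2).choose k : ℕ)) * X ^ k := by
    rw [sub_eq_neg_add, add_pow]
    refine sum_congr rfl fun k _ => ?_
    simp only [one_pow, mul_one, map_mul, map_pow, map_neg, map_ofNat, map_natCast]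
    ring
  have hvanish : ∀ k ∈ range p, k ∉ range (p / 2 + 1) →
      C (k.centralBinom : ZMod p) * X ^ k = 0 := by
    intro k hk hk'
    simp only [mem_range] at hk hk'
    rw [natCast_centralBinom_eq_zero (by omega) hk, map_zero, zero_mul]
  have hsub : range (p / 2 + 1) ⊆ range p := range_subset_range.mpr (by have := hp.pos; omega)
  rw [centralBinomPoly, ← sum_subset hsub hvanish, hexpand]
  refine sum_congr rfl fun k hk => ?_
  rw [natCast_centralBinom_eq_neg_four_pow_mul_choose hp (by have := mem_range.mp hk; omega)]

theorem centralBinomPoly_prime_mul (n : ℕ) :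
    centralBinomPoly (ZMod p) (p * n) =
      centralBinomPoly (ZMod p) p * centralBinomPoly (ZMod p) n ^ p := by
  induction n with
  | zero => simp [centralBinomPoly, zero_pow (Fact.out : p.Prime).ne_zero]
  | succ n ih =>
    have hblock : centralBinomPoly (ZMod p) (p * (n + 1)) = centralBinomPoly (ZMod p) (p * n) +
        ∑ a ∈ range p, C ((p * n + a).centralBinom : ZMod p) * X ^ (p * n + a) := by
      rw [centralBinomPoly, mul_add, mul_one, sum_range_add, centralBinomPoly]
    have hlast : (C (n.centralBinom : ZMod p) * X ^ n) ^ p =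
        C (n.centralBinom : ZMod p) * X ^ (p * n) := by
      rw [mul_pow, ← C_pow, ZMod.pow_card, ← pow_mul, mul_comm n]
    rw [hblock, ih, centralBinomPoly_succ, add_pow_char, hlast, mul_add]
    congr 1
    rw [centralBinomPoly, sum_mul]
    refine sum_congr rfl fun a ha => ?_
    rw [natCast_centralBinom_mul_add n (mem_range.mp ha), map_mul, pow_add]
    ring

theorem centralBinomPoly_prime_pow (hp : Odd p) (r : ℕ) :
    centralBinomPoly (ZMod p) (p ^ r) = (1 - 4 * X) ^ (p ^ r / 2) := by
  induction r with
  | zero => simp [centralBinomPoly]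
  | succ r ih =>
    have hexp : p / 2 + p ^ r / 2 * p = p ^ (r + 1) / 2 := by
      have h1 := Nat.two_mul_div_two_add_one_of_odd hp
      have h2 := Nat.two_mul_div_two_add_one_of_odd (hp.pow (n := r))
      have h3 : p ^ (r + 1) = 2 * (p ^ r / 2 * p) + p := by
        rw [pow_succ]
        nth_rewrite 1 [← h2]
        ring
      omega
    rw [pow_succ', centralBinomPoly_prime_mul, centralBinomPoly_prime hp, ih, ← pow_mul,
      ← pow_add, hexp, pow_succ']

end CentralBinomPolyModPrime

theorem weighted_central_binomial_polynomial_mod_p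
    (p : ℕ) (hp : p.Prime) (hodd : Odd p) (r : ℕ) (hr : 1 ≤ r) (q : ℕ) (hq : q = p ^ r) :
    ∑ k ∈ Finset.range q, Polynomial.C ((k * (2 * k).choose k : ZMod p)) * Polynomial.X ^ k =
      2 * Polynomial.X * (1 - 4 * Polynomial.X : Polynomial (ZMod p)) ^ ((q - 3) / 2) := by
  have : Fact p.Prime := ⟨hp⟩
  have hq_odd : Odd q := hq ▸ hodd.pow
  have hq_zero : (q : ZMod p) = 0 := by
    rw [hq, Nat.cast_pow, ZMod.natCast_self, zero_pow (by omega)]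
  have hexp : q / 2 - 1 = (q - 3) / 2 := by
    have := Nat.two_mul_div_two_add_one_of_odd hq_odd
    omega
  have hcoeff : ((q / 2 : ℕ) : ZMod p) * -4 = 2 := by
    linear_combination (-2 : ZMod p) * two_mul_natCast_div_two hq_odd hq_zero
  have hF : centralBinomPoly (ZMod p) q = (1 - 4 * X) ^ (q / 2) :=
    hq ▸ centralBinomPoly_prime_pow hodd r
  calc _ = X * derivative (centralBinomPoly (ZMod p) q) :=
        (X_mul_derivative_centralBinomPoly (ZMod p) q).symm
    _ = C (((q / 2 : ℕ) : ZMod p) * -4) * X * (1 - 4 * X) ^ (q / 2 - 1) := by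
        rw [hF, derivative_pow]
        simp only [map_natCast, map_mul, map_neg, map_ofNat, derivative_sub, derivative_one,
          derivative_mul, derivative_ofNat, derivative_X]
        ring
    _ = _ := by rw [hcoeff, hexp, map_ofNat]
end
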